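/- Let g₂ be the complex Lie algebra on ℂ³ with brackets [e₁,e₃]=e₁+e₂, [e₂,e₃]=e₂ (all other basis brackets zero). Then H²(g₂; g₂) has dimension 1 over ℂ, and H³(g₂; g₂) = 0. -/
import Mathlib

set_option maxHeartbeats 1000000


noncomputable section

/-- The underlying vector space `ℂ³`. -/
abbrev E3 : Type := Fin 3 → ℂ

/-- The standard basis vectors of `ℂ³`. -/
def e1 : E3 := ![1, 0, 0]
def e2 : E3 := ![0, 1, 0]
def e3 : E3 := ![0, 0, 1]

/-- The unique antisymmetric bilinear bracket on `ℂ³` with `[e₁,e₂] = c12`,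
`[e₁,e₃] = c13`, `[e₂,e₃] = c23`. -/
def br (c12 c13 c23 : E3) (u v : E3) : E3 :=
  (u 0 * v 1 - u 1 * v 0) • c12 + (u 0 * v 2 - u 2 * v 0) • c13 +
    (u 1 * v 2 - u 2 * v 1) • c23

/-- The Jacobi identity for a bracket. -/
def Jacobi (b : E3 → E3 → E3) : Prop :=
  ∀ u v w : E3, b (b u v) w + b (b v w) u + b (b w u) v = 0

/-- `f : ℂ³ → ℂ³` is ℂ-linear. -/
def IsLin (f : E3 → E3) : Prop :=
  ∀ (a : ℂ) (x y : E3), f (a • x + y) = a • f x + f y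

/-- `φ : ℂ³ × ℂ³ → ℂ³` is ℂ-bilinear. -/
def IsBil (φ : E3 → E3 → E3) : Prop :=
  (∀ (a : ℂ) (x x' y : E3), φ (a • x + x') y = a • φ x y + φ x' y) ∧
  (∀ (a : ℂ) (x y y' : E3), φ x (a • y + y') = a • φ x y + φ x y')

/-- `φ` is alternating (as a 2-cochain). -/
def IsAlt2 (φ : E3 → E3 → E3) : Prop := ∀ x : E3, φ x x = 0

/-- `ψ : (ℂ³)³ → ℂ³` is ℂ-trilinear. -/
def IsTril (ψ : E3 → E3 → E3 → E3) : Prop :=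
  (∀ (a : ℂ) (x x' y z : E3), ψ (a • x + x') y z = a • ψ x y z + ψ x' y z) ∧
  (∀ (a : ℂ) (x y y' z : E3), ψ x (a • y + y') z = a • ψ x y z + ψ x y' z) ∧
  (∀ (a : ℂ) (x y z z' : E3), ψ x y (a • z + z') = a • ψ x y z + ψ x y z')

/-- `ψ` is alternating (as a 3-cochain): it vanishes whenever two arguments coincide. -/
def IsAlt3 (ψ : E3 → E3 → E3 → E3) : Prop :=
  ∀ x y : E3, ψ x x y = 0 ∧ ψ x y y = 0 ∧ ψ x y x = 0

/-- The coboundary of a 1-cochain `f`, with respect to the bracket `b`: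
`(δf)(x,y) = [x, f y] − [y, f x] − f [x,y]`. -/
def cb1 (b : E3 → E3 → E3) (f : E3 → E3) : E3 → E3 → E3 :=
  fun x y => b x (f y) - b y (f x) - f (b x y)

/-- The coboundary of a 2-cochain `φ`, with respect to the bracket `b`:
`(δφ)(x,y,z) = [x, φ(y,z)] − [y, φ(x,z)] + [z, φ(x,y)] − φ([x,y],z) + φ([x,z],y) − φ([y,z],x)`. -/
def cb2 (b : E3 → E3 → E3) (φ : E3 → E3 → E3) : E3 → E3 → E3 → E3 :=
  fun x y z =>
    b x (φ y z) - b y (φ x z) + b z (φ x y) - φ (b x y) z + φ (b x z) y - φ (b y z) x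

/-- `f` is a derivation of the bracket `b`. -/
def IsDeriv (b : E3 → E3 → E3) (f : E3 → E3) : Prop :=
  IsLin f ∧ ∀ x y : E3, f (b x y) = b (f x) y + b x (f y)

/-- The space of derivations of the bracket `b`.  (The set of derivations is already a
ℂ-subspace, so taking its span does not change it.) -/
def DerSpace (b : E3 → E3 → E3) : Submodule ℂ (E3 → E3) :=
  Submodule.span ℂ {f : E3 → E3 | IsDeriv b f}

/-- The space of 2-cocycles with adjoint coefficients. -/
def Z2 (b : E3 → E3 → E3) : Submodule ℂ (E3 → E3 → E3) :=
  Submodule.span ℂ {φ : E3 → E3 → E3 | IsBil φ ∧ IsAlt2 φ ∧ cb2 b φ = 0}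

/-- The space of 2-coboundaries with adjoint coefficients. -/
def B2 (b : E3 → E3 → E3) : Submodule ℂ (E3 → E3 → E3) :=
  Submodule.span ℂ {φ : E3 → E3 → E3 | ∃ f : E3 → E3, IsLin f ∧ φ = cb1 b f}

/-- The space of all 3-cochains (alternating trilinear maps); every 3-cochain is a
3-cocycle since `dim = 3`. -/
def C3 : Submodule ℂ (E3 → E3 → E3 → E3) :=
  Submodule.span ℂ {ψ : E3 → E3 → E3 → E3 | IsTril ψ ∧ IsAlt3 ψ}

/-- The space of 3-coboundaries with adjoint coefficients. -/
def B3 (b : E3 → E3 → E3) : Submodule ℂ (E3 → E3 → E3 → E3) :=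
  Submodule.span ℂ
    {ψ : E3 → E3 → E3 → E3 | ∃ φ : E3 → E3 → E3, IsBil φ ∧ IsAlt2 φ ∧ ψ = cb2 b φ}

/-- The dimension of `H²(L;L)`: cocycles modulo coboundaries. -/
def H2dim (b : E3 → E3 → E3) : ℕ :=
  Module.finrank ℂ (Z2 b ⧸ (B2 b).comap (Z2 b).subtype)

/-- The dimension of `H³(L;L)`: 3-cochains modulo coboundaries of 2-cochains. -/
def H3dim (b : E3 → E3 → E3) : ℕ :=
  Module.finrank ℂ (C3 ⧸ (B3 b).comap C3.subtype)


/-! ### Auxiliary development -/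

/-- The `g₂` bracket. -/
def Bg : E3 → E3 → E3 := br 0 (e1 + e2) e2

/-- Componentwise extensionality for `ℂ³`. -/
lemma e3ext {a b : E3} (h0 : a 0 = b 0) (h1 : a 1 = b 1) (h2 : a 2 = b 2) : a = b := by
  funext i; fin_cases i; exacts [h0, h1, h2]

/-- The determinant of three vectors. -/
def dt (x y z : E3) : ℂ :=
  x 0 * (y 1 * z 2 - y 2 * z 1) - x 1 * (y 0 * z 2 - y 2 * z 0) + x 2 * (y 0 * z 1 - y 1 * z 0)

/-- The generic alternating trilinear map. -/
def tgen (D : E3) : E3 → E3 → E3 → E3 := fun x y z => dt x y z • D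

/-- The generic linear map with columns `p q r`. -/
def genf (p q r : E3) : E3 → E3 := fun u => u 0 • p + u 1 • q + u 2 • r

lemma br_bil (A B C : E3) : IsBil (br A B C) := by
  constructor <;> intro a x x' y <;> funext i <;>
    · simp only [br, Pi.add_apply, Pi.smul_apply, smul_eq_mul]
      ring

lemma br_alt (A B C : E3) : IsAlt2 (br A B C) := by
  intro x; funext i
  simp only [br, Pi.add_apply, Pi.smul_apply, smul_eq_mul, Pi.zero_apply]
  ring

lemma tgen_tril (D : E3) : IsTril (tgen D) := by
  refine ⟨?_, ?_, ?_⟩ <;> intro a x y z w <;> funext i <;>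
    · simp only [tgen, dt, Pi.add_apply, Pi.smul_apply, smul_eq_mul]
      ring

lemma tgen_alt (D : E3) : IsAlt3 (tgen D) := by
  intro x y
  refine ⟨?_, ?_, ?_⟩ <;> funext i <;>
    · simp only [tgen, dt, Pi.smul_apply, smul_eq_mul, Pi.zero_apply]
      ring

lemma lin_genf (p q r : E3) : IsLin (genf p q r) := by
  intro a x y; funext i
  simp only [genf, Pi.add_apply, Pi.smul_apply, smul_eq_mul]
  ring

lemma lin_zero {f : E3 → E3} (hf : IsLin f) : f 0 = 0 := by
  have h := hf 1 0 0
  simp only [one_smul, add_zero] at h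
  exact (left_eq_add.mp h)

lemma lin_apply {f : E3 → E3} (hf : IsLin f) (u : E3) :
    f u = u 0 • f e1 + u 1 • f e2 + u 2 • f e3 := by
  have hu : u = u 0 • e1 + (u 1 • e2 + (u 2 • e3 + 0)) := by
    funext i; fin_cases i <;> simp [e1, e2, e3]
  calc f u = f (u 0 • e1 + (u 1 • e2 + (u 2 • e3 + 0))) := by conv_lhs => rw [hu]
    _ = u 0 • f e1 + (u 1 • f e2 + (u 2 • f e3 + f 0)) := by rw [hf, hf, hf]
    _ = u 0 • f e1 + u 1 • f e2 + u 2 • f e3 := by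
        rw [lin_zero hf, add_zero, ← add_assoc]

lemma lin_eq {f : E3 → E3} (hf : IsLin f) : f = genf (f e1) (f e2) (f e3) :=
  funext fun u => lin_apply hf u

lemma bil_eq {φ : E3 → E3 → E3} (hb : IsBil φ) (ha : IsAlt2 φ) :
    φ = br (φ e1 e2) (φ e1 e3) (φ e2 e3) := by
  have hL : ∀ v u, φ u v = u 0 • φ e1 v + u 1 • φ e2 v + u 2 • φ e3 v := fun v u =>
    lin_apply (f := fun x => φ x v) (fun a x y => hb.1 a x y v) u
  have hR : ∀ u v, φ u v = v 0 • φ u e1 + v 1 • φ u e2 + v 2 • φ u e3 := fun u v =>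
    lin_apply (f := fun y => φ u y) (fun a x y => hb.2 a u x y) v
  have anti : ∀ x y, φ y x = -φ x y := by
    intro x y
    have h1 : φ (x + y) (x + y) = φ x (x + y) + φ y (x + y) := by
      have := hb.1 1 x y (x + y); simpa using this
    have h2 : φ x (x + y) = φ x x + φ x y := by
      have := hb.2 1 x x y; simpa using this
    have h3 : φ y (x + y) = φ y x + φ y y := by
      have := hb.2 1 y x y; simpa using this
    rw [ha (x + y), h2, h3, ha x, ha y, zero_add, add_zero] at h1
    linear_combination -h1
  funext u v
  rw [hL v u, hR e1 v, hR e2 v, hR e3 v]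
  simp only [ha e1, ha e2, ha e3, anti e1 e2, anti e1 e3, anti e2 e3]
  simp only [br]
  module

lemma tril_eq {ψ : E3 → E3 → E3 → E3} (ht : IsTril ψ) (ha : IsAlt3 ψ) :
    ψ = tgen (ψ e1 e2 e3) := by
  have hL1 : ∀ y z u, ψ u y z = u 0 • ψ e1 y z + u 1 • ψ e2 y z + u 2 • ψ e3 y z :=
    fun y z u => lin_apply (f := fun x => ψ x y z) (fun a x x' => ht.1 a x x' y z) u
  have hL2 : ∀ x z v, ψ x v z = v 0 • ψ x e1 z + v 1 • ψ x e2 z + v 2 • ψ x e3 z :=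
    fun x z v => lin_apply (f := fun y => ψ x y z) (fun a y y' => ht.2.1 a x y y' z) v
  have hL3 : ∀ x y w, ψ x y w = w 0 • ψ x y e1 + w 1 • ψ x y e2 + w 2 • ψ x y e3 :=
    fun x y w => lin_apply (f := fun z => ψ x y z) (fun a z z' => ht.2.2 a x y z z') w
  have anti12 : ∀ x y z, ψ y x z = -ψ x y z := by
    intro x y z
    have h1 : ψ (x + y) (x + y) z = ψ x (x + y) z + ψ y (x + y) z := by
      have := ht.1 1 x y (x + y) z; simpa using this
    have h2 : ψ x (x + y) z = ψ x x z + ψ x y z := by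
      have := ht.2.1 1 x x y z; simpa using this
    have h3 : ψ y (x + y) z = ψ y x z + ψ y y z := by
      have := ht.2.1 1 y x y z; simpa using this
    rw [(ha (x + y) z).1, h2, h3, (ha x z).1, (ha y z).1, zero_add, add_zero] at h1
    linear_combination -h1
  have anti23 : ∀ x y z, ψ x z y = -ψ x y z := by
    intro x y z
    have h1 : ψ x (y + z) (y + z) = ψ x y (y + z) + ψ x z (y + z) := by
      have := ht.2.1 1 x y z (y + z); simpa using this
    have h2 : ψ x y (y + z) = ψ x y y + ψ x y z := by
      have := ht.2.2 1 x y y z; simpa using this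
    have h3 : ψ x z (y + z) = ψ x z y + ψ x z z := by
      have := ht.2.2 1 x z y z; simpa using this
    rw [(ha x (y + z)).2.1, h2, h3, (ha x y).2.1, (ha x z).2.1, zero_add, add_zero] at h1
    linear_combination -h1
  have z11 : ∀ y, ψ e1 e1 y = 0 := fun y => (ha e1 y).1
  have z22 : ∀ y, ψ e2 e2 y = 0 := fun y => (ha e2 y).1
  have z33 : ∀ y, ψ e3 e3 y = 0 := fun y => (ha e3 y).1
  have y11 : ∀ x, ψ x e1 e1 = 0 := fun x => (ha x e1).2.1
  have y22 : ∀ x, ψ x e2 e2 = 0 := fun x => (ha x e2).2.1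
  have y33 : ∀ x, ψ x e3 e3 = 0 := fun x => (ha x e3).2.1
  have x11 : ∀ y, ψ e1 y e1 = 0 := fun y => (ha e1 y).2.2
  have x22 : ∀ y, ψ e2 y e2 = 0 := fun y => (ha e2 y).2.2
  have x33 : ∀ y, ψ e3 y e3 = 0 := fun y => (ha e3 y).2.2
  have h213 : ψ e2 e1 e3 = -ψ e1 e2 e3 := anti12 e1 e2 e3
  have h132 : ψ e1 e3 e2 = -ψ e1 e2 e3 := anti23 e1 e2 e3
  have h231 : ψ e2 e3 e1 = ψ e1 e2 e3 := by
    have := anti23 e2 e1 e3; rw [h213] at this; simpa using this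
  have h312 : ψ e3 e1 e2 = ψ e1 e2 e3 := by
    have := anti12 e1 e3 e2; rw [h132] at this; simpa using this
  have h321 : ψ e3 e2 e1 = -ψ e1 e2 e3 := by
    have := anti12 e2 e3 e1; rw [h231] at this; simpa using this
  funext u v w
  rw [hL1 v w u, hL2 e1 w v, hL2 e2 w v, hL2 e3 w v,
    hL3 e1 e1 w, hL3 e1 e2 w, hL3 e1 e3 w, hL3 e2 e1 w, hL3 e2 e2 w, hL3 e2 e3 w,
    hL3 e3 e1 w, hL3 e3 e2 w, hL3 e3 e3 w]
  simp only [z11, z22, z33, y11, y22, y33, x11, x22, x33,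
    h213, h132, h231, h312, h321]
  simp only [tgen, dt]
  module

/-- The simp set for componentwise computations. -/
lemma cv0 (a b c : ℂ) : (![a, b, c] : E3) 0 = a := rfl
lemma cv1 (a b c : ℂ) : (![a, b, c] : E3) 1 = b := rfl
lemma cv2 (a b c : ℂ) : (![a, b, c] : E3) 2 = c := rfl

/-- The 2-coboundary of a generic alternating bilinear map. -/
lemma cb2_br (A B C : E3) :
    cb2 Bg (br A B C) = tgen ![C 2 + A 0, C 2 - B 2 - A 0 + A 1, 2 * A 2] := by
  funext x y z
  refine e3ext ?_ ?_ ?_ <;>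
    · simp only [cb2, Bg, br, tgen, dt, e1, e2, e3, Pi.add_apply, Pi.sub_apply,
        Pi.smul_apply, smul_eq_mul, Pi.zero_apply, cv0, cv1, cv2]
      ring

/-- The 1-coboundary of a generic linear map. -/
lemma cb1_genf (p q r : E3) :
    cb1 Bg (genf p q r) =
      br ![q 2, q 2 - p 2, 0] ![r 2 - q 0, r 2 + p 0 - q 1, -p 2 - q 2]
        ![0, r 2 + q 0, -q 2] := by
  funext x y
  refine e3ext ?_ ?_ ?_ <;>
    · simp only [cb1, Bg, br, genf, e1, e2, e3, Pi.add_apply, Pi.sub_apply,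
        Pi.smul_apply, smul_eq_mul, Pi.zero_apply, Pi.neg_apply, cv0, cv1, cv2]
      ring

lemma br_12 (A B C : E3) : br A B C e1 e2 = A := by
  funext i; simp [br, e1, e2]

lemma br_13 (A B C : E3) : br A B C e1 e3 = B := by
  funext i; simp [br, e1, e3]

lemma br_23 (A B C : E3) : br A B C e2 e3 = C := by
  funext i; simp [br, e2, e3]

lemma tgen_123 (D : E3) : tgen D e1 e2 e3 = D := by
  funext i; simp [tgen, dt, e1, e2, e3]

lemma tgen_eq_zero {D : E3} (h : D = 0) : tgen D = 0 := by
  subst h; funext x y z; simp [tgen]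

/-- Basis of the 2-cocycle space. -/
def vb : Fin 6 → (E3 → E3 → E3)
  | 0 => br 0 e1 0
  | 1 => br 0 e2 0
  | 2 => br e2 e3 0
  | 3 => br 0 0 e1
  | 4 => br 0 0 e2
  | 5 => br ![-1, -2, 0] 0 e3

/-- Spanning family of the 2-coboundary space. -/
def wb : Fin 5 → (E3 → E3 → E3)
  | 0 => cb1 Bg (genf e3 0 0)
  | 1 => cb1 Bg (genf 0 e3 0)
  | 2 => cb1 Bg (genf 0 0 e3)
  | 3 => cb1 Bg (genf 0 e1 0)
  | 4 => cb1 Bg (genf e1 0 0)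

lemma br_mem_Z2set (A B C : E3)
    (h : (![C 2 + A 0, C 2 - B 2 - A 0 + A 1, 2 * A 2] : E3) = 0) :
    br A B C ∈ {φ : E3 → E3 → E3 | IsBil φ ∧ IsAlt2 φ ∧ cb2 Bg φ = 0} :=
  ⟨br_bil A B C, br_alt A B C, by rw [cb2_br]; exact tgen_eq_zero h⟩

lemma hZ2 : Z2 Bg = Submodule.span ℂ (Set.range vb) := by
  apply le_antisymm
  · rw [Z2, Submodule.span_le]
    rintro φ ⟨hbφ, haφ, hcφ⟩
    have hφ : φ = br (φ e1 e2) (φ e1 e3) (φ e2 e3) := bil_eq hbφ haφ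
    set A := φ e1 e2 with hA
    set B := φ e1 e3 with hB
    set C := φ e2 e3 with hC
    rw [hφ, cb2_br] at hcφ
    have hw : (![C 2 + A 0, C 2 - B 2 - A 0 + A 1, 2 * A 2] : E3) = 0 := by
      have := congrFun (congrFun (congrFun hcφ e1) e2) e3
      rwa [tgen_123] at this
    have h0 : C 2 + A 0 = 0 := by have := congrFun hw 0; simpa [cv0] using this
    have h1 : C 2 - B 2 - A 0 + A 1 = 0 := by have := congrFun hw 1; simpa [cv1] using this
    have h2 : 2 * A 2 = 0 := by have := congrFun hw 2; simpa [cv2] using this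
    have hcomb : φ = B 0 • vb 0 + B 1 • vb 1 + B 2 • vb 2 + C 0 • vb 3 + C 1 • vb 4 +
        C 2 • vb 5 := by
      rw [hφ]
      funext u v
      refine e3ext ?_ ?_ ?_
      · simp only [vb, br, e1, e2, e3, Pi.add_apply, Pi.smul_apply, smul_eq_mul,
          Pi.zero_apply, cv0, cv1, cv2]
        linear_combination (u 0 * v 1 - u 1 * v 0) * h0
      · simp only [vb, br, e1, e2, e3, Pi.add_apply, Pi.smul_apply, smul_eq_mul,
          Pi.zero_apply, cv0, cv1, cv2]
        linear_combination (u 0 * v 1 - u 1 * v 0) * h1 + (u 0 * v 1 - u 1 * v 0) * h0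
      · simp only [vb, br, e1, e2, e3, Pi.add_apply, Pi.smul_apply, smul_eq_mul,
          Pi.zero_apply, cv0, cv1, cv2]
        linear_combination ((u 0 * v 1 - u 1 * v 0) / 2) * h2
    rw [hcomb]
    have mem : ∀ j : Fin 6, vb j ∈ Submodule.span ℂ (Set.range vb) := fun j =>
      Submodule.subset_span ⟨j, rfl⟩
    exact add_mem (add_mem (add_mem (add_mem (add_mem
      (Submodule.smul_mem _ _ (mem 0)) (Submodule.smul_mem _ _ (mem 1)))
      (Submodule.smul_mem _ _ (mem 2))) (Submodule.smul_mem _ _ (mem 3)))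
      (Submodule.smul_mem _ _ (mem 4))) (Submodule.smul_mem _ _ (mem 5))
  · rw [Submodule.span_le]
    rintro _ ⟨i, rfl⟩
    apply Submodule.subset_span
    fin_cases i
    · exact br_mem_Z2set _ _ _ (by refine e3ext ?_ ?_ ?_ <;> simp [e1, cv0, cv1, cv2])
    · exact br_mem_Z2set _ _ _ (by refine e3ext ?_ ?_ ?_ <;> simp [e2, cv0, cv1, cv2])
    · exact br_mem_Z2set _ _ _ (by refine e3ext ?_ ?_ ?_ <;> simp [e2, e3, cv0, cv1, cv2])
    · exact br_mem_Z2set _ _ _ (by refine e3ext ?_ ?_ ?_ <;> simp [e1, cv0, cv1, cv2])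
    · exact br_mem_Z2set _ _ _ (by refine e3ext ?_ ?_ ?_ <;> simp [e2, cv0, cv1, cv2])
    · exact br_mem_Z2set _ _ _
        (by refine e3ext ?_ ?_ ?_ <;> (simp [e3, cv0, cv1, cv2]; try norm_num))

/-- The coefficient identity expressing a generic coboundary in terms of `wb`. -/
lemma wcomb (p q r : E3) :
    cb1 Bg (genf p q r) = p 2 • wb 0 + q 2 • wb 1 + r 2 • wb 2 + q 0 • wb 3 +
      (p 0 - q 1) • wb 4 := by
  simp only [wb, cb1_genf]
  funext u v
  refine e3ext ?_ ?_ ?_ <;>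
    · simp only [br, e1, e2, e3, Pi.add_apply, Pi.smul_apply, smul_eq_mul,
        Pi.zero_apply, Pi.neg_apply, Pi.sub_apply, cv0, cv1, cv2]
      ring

lemma hB2 : B2 Bg = Submodule.span ℂ (Set.range wb) := by
  apply le_antisymm
  · rw [B2, Submodule.span_le]
    rintro _ ⟨f, hf, rfl⟩
    rw [lin_eq hf, wcomb]
    have mem : ∀ j : Fin 5, wb j ∈ Submodule.span ℂ (Set.range wb) := fun j =>
      Submodule.subset_span ⟨j, rfl⟩
    exact add_mem (add_mem (add_mem (add_mem
      (Submodule.smul_mem _ _ (mem 0)) (Submodule.smul_mem _ _ (mem 1)))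
      (Submodule.smul_mem _ _ (mem 2))) (Submodule.smul_mem _ _ (mem 3)))
      (Submodule.smul_mem _ _ (mem 4))
  · rw [Submodule.span_le]
    rintro _ ⟨i, rfl⟩
    apply Submodule.subset_span
    fin_cases i
    · exact ⟨genf e3 0 0, lin_genf _ _ _, rfl⟩
    · exact ⟨genf 0 e3 0, lin_genf _ _ _, rfl⟩
    · exact ⟨genf 0 0 e3, lin_genf _ _ _, rfl⟩
    · exact ⟨genf 0 e1 0, lin_genf _ _ _, rfl⟩
    · exact ⟨genf e1 0 0, lin_genf _ _ _, rfl⟩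

lemma hBZ : B2 Bg ≤ Z2 Bg := by
  rw [hB2, Submodule.span_le]
  rintro _ ⟨i, rfl⟩
  fin_cases i
  · show cb1 Bg (genf e3 0 0) ∈ Z2 Bg
    rw [cb1_genf]
    exact Submodule.subset_span (br_mem_Z2set _ _ _
      (by refine e3ext ?_ ?_ ?_ <;> (simp [e1, e3, cv0, cv1, cv2]; try norm_num)))
  · show cb1 Bg (genf 0 e3 0) ∈ Z2 Bg
    rw [cb1_genf]
    exact Submodule.subset_span (br_mem_Z2set _ _ _
      (by refine e3ext ?_ ?_ ?_ <;> (simp [e1, e3, cv0, cv1, cv2]; try norm_num)))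
  · show cb1 Bg (genf 0 0 e3) ∈ Z2 Bg
    rw [cb1_genf]
    exact Submodule.subset_span (br_mem_Z2set _ _ _
      (by refine e3ext ?_ ?_ ?_ <;> (simp [e1, e3, cv0, cv1, cv2]; try norm_num)))
  · show cb1 Bg (genf 0 e1 0) ∈ Z2 Bg
    rw [cb1_genf]
    exact Submodule.subset_span (br_mem_Z2set _ _ _
      (by refine e3ext ?_ ?_ ?_ <;> (simp [e1, e3, cv0, cv1, cv2]; try norm_num)))
  · show cb1 Bg (genf e1 0 0) ∈ Z2 Bg
    rw [cb1_genf]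
    exact Submodule.subset_span (br_mem_Z2set _ _ _
      (by refine e3ext ?_ ?_ ?_ <;> (simp [e1, e3, cv0, cv1, cv2]; try norm_num)))

lemma vb_indep : LinearIndependent ℂ vb := by
  rw [Fintype.linearIndependent_iff]
  intro g hg
  rw [Fin.sum_univ_six] at hg
  have c130 := congrFun (congrFun (congrFun hg e1) e3) 0
  have c131 := congrFun (congrFun (congrFun hg e1) e3) 1
  have c132 := congrFun (congrFun (congrFun hg e1) e3) 2
  have c230 := congrFun (congrFun (congrFun hg e2) e3) 0
  have c231 := congrFun (congrFun (congrFun hg e2) e3) 1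
  have c232 := congrFun (congrFun (congrFun hg e2) e3) 2
  simp only [vb, Pi.add_apply, Pi.smul_apply, smul_eq_mul, Pi.zero_apply,
    br_12, br_13, br_23] at c130 c131 c132 c230 c231 c232
  simp [e1, e2, e3, cv0, cv1, cv2] at c130 c131 c132 c230 c231 c232
  intro i
  fin_cases i
  exacts [c130, c131, c132, c230, c231, c232]

lemma wb_indep : LinearIndependent ℂ wb := by
  rw [Fintype.linearIndependent_iff]
  intro g hg
  rw [Fin.sum_univ_five] at hg
  have c120 := congrFun (congrFun (congrFun hg e1) e2) 0
  have c121 := congrFun (congrFun (congrFun hg e1) e2) 1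
  have c130 := congrFun (congrFun (congrFun hg e1) e3) 0
  have c131 := congrFun (congrFun (congrFun hg e1) e3) 1
  have c231 := congrFun (congrFun (congrFun hg e2) e3) 1
  simp only [wb, cb1_genf, Pi.add_apply, Pi.smul_apply, smul_eq_mul, Pi.zero_apply,
    br_12, br_13, br_23] at c120 c121 c130 c131 c231
  simp [cv0, cv1, cv2, Pi.zero_apply, e1, e3] at c120 c121 c130 c131 c231
  intro i
  fin_cases i
  · show g 0 = 0
    linear_combination c120 - c121
  · show g 1 = 0
    exact c120
  · show g 2 = 0
    linear_combination (c130 + c231) / 2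
  · show g 3 = 0
    linear_combination (c231 - c130) / 2
  · show g 4 = 0
    linear_combination c131 - (c130 + c231) / 2

lemma finrank_Z2 : Module.finrank ℂ (Z2 Bg) = 6 := by
  rw [hZ2, finrank_span_eq_card vb_indep]
  simp

lemma finrank_B2 : Module.finrank ℂ (B2 Bg) = 5 := by
  rw [hB2, finrank_span_eq_card wb_indep]
  simp

set_option synthInstance.maxHeartbeats 1000000 in
lemma hH2 : H2dim Bg = 1 := by
  show Module.finrank ℂ (Z2 Bg ⧸ (B2 Bg).comap (Z2 Bg).subtype) = 1
  haveI : FiniteDimensional ℂ (Z2 Bg) := by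
    rw [hZ2]; exact FiniteDimensional.span_of_finite ℂ (Set.finite_range vb)
  have hq := Submodule.finrank_quotient_add_finrank ((B2 Bg).comap (Z2 Bg).subtype)
  have hcomap : Module.finrank ℂ ((B2 Bg).comap (Z2 Bg).subtype) =
      Module.finrank ℂ (B2 Bg) := (Submodule.comapSubtypeEquivOfLe hBZ).finrank_eq
  rw [hcomap, finrank_B2, finrank_Z2] at hq
  omega

lemma hB3C3 : B3 Bg = C3 := by
  apply le_antisymm
  · rw [B3, Submodule.span_le]
    rintro _ ⟨φ, hbφ, haφ, rfl⟩
    apply Submodule.subset_span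
    rw [bil_eq hbφ haφ, cb2_br]
    exact ⟨tgen_tril _, tgen_alt _⟩
  · rw [C3, Submodule.span_le]
    rintro ψ ⟨ht, ha⟩
    apply Submodule.subset_span
    refine ⟨br ![ψ e1 e2 e3 0, ψ e1 e2 e3 0 + ψ e1 e2 e3 1, ψ e1 e2 e3 2 / 2] 0 0,
      br_bil _ _ _, br_alt _ _ _, ?_⟩
    rw [cb2_br]
    have hD : ψ = tgen (ψ e1 e2 e3) := tril_eq ht ha
    conv_lhs => rw [hD]
    apply congrArg tgen
    refine e3ext ?_ ?_ ?_ <;>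
      · simp only [cv0, cv1, cv2, Pi.zero_apply]
        ring

lemma hH3 : H3dim Bg = 0 := by
  show Module.finrank ℂ (C3 ⧸ (B3 Bg).comap C3.subtype) = 0
  have htop : (B3 Bg).comap C3.subtype = ⊤ := by
    rw [hB3C3, Submodule.comap_subtype_self]
  haveI : Subsingleton (C3 ⧸ (B3 Bg).comap C3.subtype) :=
    Submodule.Quotient.subsingleton_iff.mpr htop
  exact Module.finrank_zero_of_subsingleton

/-- For the Lie algebra `g₂` with `[e₁,e₃]=e₁+e₂`, `[e₂,e₃]=e₂`: `H²(g₂;g₂)` has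
dimension 1 over `ℂ`, and `H³(g₂;g₂) = 0`. -/
theorem g2_H2_one_dimensional_H3_zero :
    H2dim (br 0 (e1 + e2) e2) = 1 ∧ H3dim (br 0 (e1 + e2) e2) = 0 := by
  exact ⟨hH2, hH3⟩
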